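/- For g ∈ 𝒮(ℝ × S^{n-1}), the back-projection intertwines ∂²/∂X² with the Laplacian: Δ(g^♭)(x) = ((∂²g/∂X²)^♭)(x) for all x ∈ ℝⁿ. -/

import Mathlib

set_option synthInstance.maxHeartbeats 1000000
set_option maxHeartbeats 1000000


open MeasureTheory
open scoped RealInnerProductSpace

/-- The Laplacian `Δh = Σᵢ ∂²h/∂xᵢ²` on `ℝⁿ`. -/
noncomputable def laplacian {n : ℕ} (h : EuclideanSpace ℝ (Fin n) → ℝ)
    (x : EuclideanSpace ℝ (Fin n)) : ℝ :=
  ∑ i : Fin n,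
    fderiv ℝ (fun y => fderiv ℝ h y (EuclideanSpace.single i (1 : ℝ))) x
      (EuclideanSpace.single i (1 : ℝ))

/-- The back-projection of `g : ℝ × S^{n-1} → ℝ`:
`g^♭(x) = ∫_{S^{n-1}} g(ξ·x, ξ) dξ`, with `dξ` the surface measure. -/
noncomputable def backproj {n : ℕ}
    (g : ℝ × Metric.sphere (0 : EuclideanSpace ℝ (Fin n)) 1 → ℝ)
    (x : EuclideanSpace ℝ (Fin n)) : ℝ :=
  ∫ ξ : Metric.sphere (0 : EuclideanSpace ℝ (Fin n)) 1,
    g ((⟪(ξ : EuclideanSpace ℝ (Fin n)), x⟫ : ℝ), ξ)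
    ∂((volume : Measure (EuclideanSpace ℝ (Fin n))).toSphere)

/-- Any continuous function on the sphere is integrable w.r.t. the surface measure. -/
private lemma bp_integrable_of_continuous {n : ℕ} {F : Type*} [NormedAddCommGroup F]
    (f : Metric.sphere (0 : EuclideanSpace ℝ (Fin n)) 1 → F) (hf : Continuous f) :
    Integrable f ((volume : Measure (EuclideanSpace ℝ (Fin n))).toSphere) := by
  apply hf.integrable_of_hasCompactSupport
  exact IsCompact.of_isClosed_subset isCompact_univ (isClosed_tsupport f) (Set.subset_univ _)

/-- Key differentiation-under-the-integral lemma. -/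
private lemma bp_key {n : ℕ}
    (g : ℝ × Metric.sphere (0 : EuclideanSpace ℝ (Fin n)) 1 → ℝ)
    (hg_smooth : ∀ ξ : Metric.sphere (0 : EuclideanSpace ℝ (Fin n)) 1,
      ContDiff ℝ (⊤ : ℕ∞) (fun X : ℝ => g (X, ξ)))
    (hg_cont : ∀ k : ℕ, Continuous fun p : ℝ × Metric.sphere (0 : EuclideanSpace ℝ (Fin n)) 1 =>
      deriv^[k] (fun X : ℝ => g (X, p.2)) p.1)
    (hg_decay : ∀ k m : ℕ, ∃ C : ℝ,
      ∀ (X : ℝ) (ξ : Metric.sphere (0 : EuclideanSpace ℝ (Fin n)) 1),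
        |X| ^ m * |deriv^[k] (fun Y : ℝ => g (Y, ξ)) X| ≤ C)
    (k : ℕ) (w : Metric.sphere (0 : EuclideanSpace ℝ (Fin n)) 1 → ℝ)
    (hw_cont : Continuous w) (hw_bdd : ∀ ξ, |w ξ| ≤ 1)
    (x : EuclideanSpace ℝ (Fin n)) :
    HasFDerivAt
      (fun y : EuclideanSpace ℝ (Fin n) =>
        ∫ ξ, deriv^[k] (fun X => g (X, ξ)) (⟪(ξ : EuclideanSpace ℝ (Fin n)), y⟫ : ℝ) * w ξ
          ∂((volume : Measure (EuclideanSpace ℝ (Fin n))).toSphere))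
      (∫ ξ, (deriv^[k+1] (fun X => g (X, ξ)) (⟪(ξ : EuclideanSpace ℝ (Fin n)), x⟫ : ℝ) * w ξ) •
          innerSL ℝ (ξ : EuclideanSpace ℝ (Fin n))
        ∂((volume : Measure (EuclideanSpace ℝ (Fin n))).toSphere)) x := by
  obtain ⟨C, hC⟩ := hg_decay (k+1) 0
  have hC' : ∀ (X : ℝ) ξ, |deriv^[k+1] (fun Y : ℝ => g (Y, ξ)) X| ≤ C := by
    intro X ξ; simpa using hC X ξ
  have hcont : ∀ (j : ℕ) (y : EuclideanSpace ℝ (Fin n)),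
      Continuous fun ξ : Metric.sphere (0 : EuclideanSpace ℝ (Fin n)) 1 =>
        deriv^[j] (fun X => g (X, ξ)) (⟪(ξ : EuclideanSpace ℝ (Fin n)), y⟫ : ℝ) := by
    intro j y
    exact (hg_cont j).comp
      ((continuous_subtype_val.inner continuous_const).prodMk continuous_id)
  apply hasFDerivAt_integral_of_dominated_of_fderiv_le
    (F' := fun y ξ =>
      (deriv^[k+1] (fun X => g (X, ξ)) (⟪(ξ : EuclideanSpace ℝ (Fin n)), y⟫ : ℝ) * w ξ) •
        innerSL ℝ (ξ : EuclideanSpace ℝ (Fin n)))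
    (bound := fun _ => C) (Metric.ball_mem_nhds _ one_pos)
  · exact Filter.Eventually.of_forall fun y =>
      (((hcont k y).mul hw_cont)).aestronglyMeasurable
  · obtain ⟨C0, hC0⟩ := hg_decay k 0
    have hC0' : ∀ (X : ℝ) ξ, |deriv^[k] (fun Y : ℝ => g (Y, ξ)) X| ≤ C0 := by
      intro X ξ; simpa using hC0 X ξ
    refine (Integrable.mono' (integrable_const C0)
      (((hcont k x).mul hw_cont)).aestronglyMeasurable ?_)
    refine Filter.Eventually.of_forall fun ξ => ?_
    rw [Real.norm_eq_abs, abs_mul]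
    calc |deriv^[k] (fun X => g (X, ξ)) _| * |w ξ|
        ≤ C0 * 1 := mul_le_mul (hC0' _ _) (hw_bdd ξ) (abs_nonneg _)
          (le_trans (abs_nonneg _) (hC0' 0 ξ))
      _ = C0 := mul_one _
  · exact (((hcont (k+1) x).mul hw_cont).smul
      ((innerSL ℝ).continuous.comp continuous_subtype_val)).aestronglyMeasurable
  · refine Filter.Eventually.of_forall fun ξ => fun y _ => ?_
    have hCnn : (0:ℝ) ≤ C := le_trans (abs_nonneg _) (hC' 0 ξ)
    refine ContinuousLinearMap.opNorm_le_bound _ hCnn fun v => ?_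
    rw [ContinuousLinearMap.smul_apply, innerSL_apply_apply, smul_eq_mul, Real.norm_eq_abs,
      abs_mul, abs_mul]
    have h1 : |(⟪(ξ : EuclideanSpace ℝ (Fin n)), v⟫ : ℝ)| ≤ ‖v‖ := by
      have h := abs_real_inner_le_norm (ξ : EuclideanSpace ℝ (Fin n)) v
      rwa [norm_eq_of_mem_sphere ξ, one_mul] at h
    have h2 : |deriv^[k+1] (fun X => g (X, ξ))
          (⟪(ξ : EuclideanSpace ℝ (Fin n)), y⟫ : ℝ)| * |w ξ| ≤ C := by
      calc |deriv^[k+1] (fun X => g (X, ξ)) _| * |w ξ|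
          ≤ C * 1 := mul_le_mul (hC' _ _) (hw_bdd ξ) (abs_nonneg _) hCnn
        _ = C := mul_one _
    exact mul_le_mul h2 h1 (abs_nonneg _) hCnn
  · exact integrable_const C
  · refine Filter.Eventually.of_forall fun ξ => fun y _ => ?_
    have hf : ContDiff ℝ (⊤ : ℕ∞) (fun X : ℝ => g (X, ξ)) := (hg_smooth ξ).of_le (by simp)
    have hd : HasDerivAt (deriv^[k] (fun X : ℝ => g (X, ξ)))
        (deriv^[k+1] (fun X : ℝ => g (X, ξ)) (⟪(ξ : EuclideanSpace ℝ (Fin n)), y⟫ : ℝ))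
        (⟪(ξ : EuclideanSpace ℝ (Fin n)), y⟫ : ℝ) := by
      rw [Function.iterate_succ_apply']
      exact (((hf.iterate_deriv k).differentiable (by simp)) _).hasDerivAt
    have hinner : HasFDerivAt
        (fun y : EuclideanSpace ℝ (Fin n) => (⟪(ξ : EuclideanSpace ℝ (Fin n)), y⟫ : ℝ))
        (innerSL ℝ (ξ : EuclideanSpace ℝ (Fin n))) y :=
      (innerSL ℝ (ξ : EuclideanSpace ℝ (Fin n))).hasFDerivAt
    have hcomp := hd.comp_hasFDerivAt y hinner
    have hmul := hcomp.mul_const (w ξ)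
    have heq : w ξ • ((deriv^[k+1] (fun X : ℝ => g (X, ξ))
          (⟪(ξ : EuclideanSpace ℝ (Fin n)), y⟫ : ℝ)) •
          innerSL ℝ (ξ : EuclideanSpace ℝ (Fin n)))
        = (deriv^[k+1] (fun X : ℝ => g (X, ξ))
            (⟪(ξ : EuclideanSpace ℝ (Fin n)), y⟫ : ℝ) * w ξ) •
          innerSL ℝ (ξ : EuclideanSpace ℝ (Fin n)) := by
      rw [smul_smul, mul_comm]
    rw [heq] at hmul
    exact hmul

/-- The back-projection intertwines `∂²/∂X²` with the Laplacian:
`Δ(g^♭)(x) = ((∂²g/∂X²)^♭)(x)`, for `g` smooth in `X` with all `X`-derivatives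
continuous in `(X, ξ)` and rapidly decreasing in `X` uniformly in `ξ`. -/
theorem backproj_laplacian {n : ℕ}
    (g : ℝ × Metric.sphere (0 : EuclideanSpace ℝ (Fin n)) 1 → ℝ)
    (hg_smooth : ∀ ξ : Metric.sphere (0 : EuclideanSpace ℝ (Fin n)) 1,
      ContDiff ℝ (⊤ : ℕ∞) (fun X : ℝ => g (X, ξ)))
    (hg_cont : ∀ k : ℕ, Continuous fun p : ℝ × Metric.sphere (0 : EuclideanSpace ℝ (Fin n)) 1 =>
      deriv^[k] (fun X : ℝ => g (X, p.2)) p.1)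
    (hg_decay : ∀ k m : ℕ, ∃ C : ℝ,
      ∀ (X : ℝ) (ξ : Metric.sphere (0 : EuclideanSpace ℝ (Fin n)) 1),
        |X| ^ m * |deriv^[k] (fun Y : ℝ => g (Y, ξ)) X| ≤ C)
    (x : EuclideanSpace ℝ (Fin n)) :
    laplacian (backproj g) x
      = backproj (fun p => deriv (deriv (fun X : ℝ => g (X, p.2))) p.1) x := by
  classical
  set μ := (volume : Measure (EuclideanSpace ℝ (Fin n))).toSphere with hμ
  have key := bp_key g hg_smooth hg_cont hg_decay
  have hcont : ∀ (j : ℕ) (y : EuclideanSpace ℝ (Fin n)),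
      Continuous fun ξ : Metric.sphere (0 : EuclideanSpace ℝ (Fin n)) 1 =>
        deriv^[j] (fun X => g (X, ξ)) (⟪(ξ : EuclideanSpace ℝ (Fin n)), y⟫ : ℝ) := by
    intro j y
    exact (hg_cont j).comp
      ((continuous_subtype_val.inner continuous_const).prodMk continuous_id)
  have hwi_cont : ∀ i : Fin n,
      Continuous fun ξ : Metric.sphere (0 : EuclideanSpace ℝ (Fin n)) 1 =>
        (ξ : EuclideanSpace ℝ (Fin n)) i :=
    fun i => (EuclideanSpace.proj i).continuous.comp continuous_subtype_val
  have hwi_bdd : ∀ (i : Fin n) (ξ : Metric.sphere (0 : EuclideanSpace ℝ (Fin n)) 1),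
      |(ξ : EuclideanSpace ℝ (Fin n)) i| ≤ 1 := by
    intro i ξ
    have h1 : (⟪EuclideanSpace.single i (1 : ℝ), (ξ : EuclideanSpace ℝ (Fin n))⟫ : ℝ)
        = (ξ : EuclideanSpace ℝ (Fin n)) i := by
      rw [EuclideanSpace.inner_single_left]; simp
    calc |(ξ : EuclideanSpace ℝ (Fin n)) i|
        = |(⟪EuclideanSpace.single i (1 : ℝ), (ξ : EuclideanSpace ℝ (Fin n))⟫ : ℝ)| := by rw [h1]
      _ ≤ ‖EuclideanSpace.single i (1 : ℝ)‖ * ‖(ξ : EuclideanSpace ℝ (Fin n))‖ :=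
          abs_real_inner_le_norm _ _
      _ = 1 := by rw [norm_eq_of_mem_sphere ξ, EuclideanSpace.norm_single]; simp
  -- step 1 : first derivative of backproj g
  have hb : backproj g = fun y : EuclideanSpace ℝ (Fin n) =>
      ∫ ξ, deriv^[0] (fun X => g (X, ξ)) (⟪(ξ : EuclideanSpace ℝ (Fin n)), y⟫ : ℝ) *
        (fun _ : Metric.sphere (0 : EuclideanSpace ℝ (Fin n)) 1 => (1:ℝ)) ξ ∂μ := by
    funext y; simp [backproj, hμ]
  have h1 : ∀ y : EuclideanSpace ℝ (Fin n), HasFDerivAt (backproj g)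
      (∫ ξ, (deriv^[1] (fun X => g (X, ξ)) (⟪(ξ : EuclideanSpace ℝ (Fin n)), y⟫ : ℝ) *
          (fun _ : Metric.sphere (0 : EuclideanSpace ℝ (Fin n)) 1 => (1:ℝ)) ξ) •
        innerSL ℝ (ξ : EuclideanSpace ℝ (Fin n)) ∂μ) y := by
    intro y
    rw [hb]
    exact key 0 (fun _ => 1) continuous_const (by intro ξ; simp) y
  have int1 : ∀ y : EuclideanSpace ℝ (Fin n),
      Integrable (fun ξ : Metric.sphere (0 : EuclideanSpace ℝ (Fin n)) 1 =>
        (deriv^[1] (fun X => g (X, ξ)) (⟪(ξ : EuclideanSpace ℝ (Fin n)), y⟫ : ℝ) *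
          (fun _ : Metric.sphere (0 : EuclideanSpace ℝ (Fin n)) 1 => (1:ℝ)) ξ) •
        innerSL ℝ (ξ : EuclideanSpace ℝ (Fin n))) μ := by
    intro y
    exact bp_integrable_of_continuous _
      (((hcont 1 y).mul continuous_const).smul
        ((innerSL ℝ).continuous.comp continuous_subtype_val))
  -- step 2 : the i-th partial derivative as an integral
  have h2 : ∀ (i : Fin n) (y : EuclideanSpace ℝ (Fin n)),
      fderiv ℝ (backproj g) y (EuclideanSpace.single i (1 : ℝ))
        = ∫ ξ, deriv^[1] (fun X => g (X, ξ)) (⟪(ξ : EuclideanSpace ℝ (Fin n)), y⟫ : ℝ) *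
            (ξ : EuclideanSpace ℝ (Fin n)) i ∂μ := by
    intro i y
    rw [(h1 y).fderiv, ContinuousLinearMap.integral_apply (int1 y)]
    congr 1
    funext ξ
    rw [ContinuousLinearMap.smul_apply, innerSL_apply_apply, EuclideanSpace.inner_single_right]
    simp [smul_eq_mul]
  -- step 3 : second derivative
  have h3 : ∀ i : Fin n, HasFDerivAt
      (fun y : EuclideanSpace ℝ (Fin n) =>
        ∫ ξ, deriv^[1] (fun X => g (X, ξ)) (⟪(ξ : EuclideanSpace ℝ (Fin n)), y⟫ : ℝ) *
          (ξ : EuclideanSpace ℝ (Fin n)) i ∂μ)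
      (∫ ξ, (deriv^[2] (fun X => g (X, ξ)) (⟪(ξ : EuclideanSpace ℝ (Fin n)), x⟫ : ℝ) *
          (ξ : EuclideanSpace ℝ (Fin n)) i) •
        innerSL ℝ (ξ : EuclideanSpace ℝ (Fin n)) ∂μ) x := by
    intro i
    exact key 1 (fun ξ => (ξ : EuclideanSpace ℝ (Fin n)) i) (hwi_cont i) (hwi_bdd i) x
  have int2 : ∀ i : Fin n,
      Integrable (fun ξ : Metric.sphere (0 : EuclideanSpace ℝ (Fin n)) 1 =>
        (deriv^[2] (fun X => g (X, ξ)) (⟪(ξ : EuclideanSpace ℝ (Fin n)), x⟫ : ℝ) *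
          (ξ : EuclideanSpace ℝ (Fin n)) i) •
        innerSL ℝ (ξ : EuclideanSpace ℝ (Fin n))) μ := by
    intro i
    exact bp_integrable_of_continuous _
      (((hcont 2 x).mul (hwi_cont i)).smul
        ((innerSL ℝ).continuous.comp continuous_subtype_val))
  have h4 : ∀ i : Fin n,
      fderiv ℝ (fun y => fderiv ℝ (backproj g) y (EuclideanSpace.single i (1 : ℝ))) x
          (EuclideanSpace.single i (1 : ℝ))
        = ∫ ξ, deriv^[2] (fun X => g (X, ξ)) (⟪(ξ : EuclideanSpace ℝ (Fin n)), x⟫ : ℝ) *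
            (ξ : EuclideanSpace ℝ (Fin n)) i * (ξ : EuclideanSpace ℝ (Fin n)) i ∂μ := by
    intro i
    have hfun : (fun y => fderiv ℝ (backproj g) y (EuclideanSpace.single i (1 : ℝ)))
        = fun y : EuclideanSpace ℝ (Fin n) =>
          ∫ ξ, deriv^[1] (fun X => g (X, ξ)) (⟪(ξ : EuclideanSpace ℝ (Fin n)), y⟫ : ℝ) *
            (ξ : EuclideanSpace ℝ (Fin n)) i ∂μ := funext (h2 i)
    rw [hfun, (h3 i).fderiv, ContinuousLinearMap.integral_apply (int2 i)]
    congr 1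
    funext ξ
    rw [ContinuousLinearMap.smul_apply, innerSL_apply_apply, EuclideanSpace.inner_single_right]
    simp [smul_eq_mul]
  -- step 4 : sum over i
  have int3 : ∀ i : Fin n,
      Integrable (fun ξ : Metric.sphere (0 : EuclideanSpace ℝ (Fin n)) 1 =>
        deriv^[2] (fun X => g (X, ξ)) (⟪(ξ : EuclideanSpace ℝ (Fin n)), x⟫ : ℝ) *
          (ξ : EuclideanSpace ℝ (Fin n)) i * (ξ : EuclideanSpace ℝ (Fin n)) i) μ := by
    intro i
    exact bp_integrable_of_continuous _ (((hcont 2 x).mul (hwi_cont i)).mul (hwi_cont i))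
  have hsum : ∀ ξ : Metric.sphere (0 : EuclideanSpace ℝ (Fin n)) 1,
      ∑ i : Fin n, (ξ : EuclideanSpace ℝ (Fin n)) i * (ξ : EuclideanSpace ℝ (Fin n)) i = 1 := by
    intro ξ
    have h := real_inner_self_eq_norm_sq (ξ : EuclideanSpace ℝ (Fin n))
    rw [norm_eq_of_mem_sphere ξ] at h
    rw [PiLp.inner_apply] at h
    simpa [pow_two] using h
  rw [laplacian]
  calc ∑ i : Fin n,
        fderiv ℝ (fun y => fderiv ℝ (backproj g) y (EuclideanSpace.single i (1 : ℝ))) x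
          (EuclideanSpace.single i (1 : ℝ))
      = ∑ i : Fin n, ∫ ξ, deriv^[2] (fun X => g (X, ξ))
          (⟪(ξ : EuclideanSpace ℝ (Fin n)), x⟫ : ℝ) *
          (ξ : EuclideanSpace ℝ (Fin n)) i * (ξ : EuclideanSpace ℝ (Fin n)) i ∂μ :=
        Finset.sum_congr rfl fun i _ => h4 i
    _ = ∫ ξ, ∑ i : Fin n, deriv^[2] (fun X => g (X, ξ))
          (⟪(ξ : EuclideanSpace ℝ (Fin n)), x⟫ : ℝ) *
          (ξ : EuclideanSpace ℝ (Fin n)) i * (ξ : EuclideanSpace ℝ (Fin n)) i ∂μ :=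
        (integral_finset_sum _ fun i _ => int3 i).symm
    _ = ∫ ξ, deriv^[2] (fun X => g (X, ξ))
          (⟪(ξ : EuclideanSpace ℝ (Fin n)), x⟫ : ℝ) ∂μ := by
        apply integral_congr_ae
        refine Filter.Eventually.of_forall fun ξ => ?_
        show ∑ i : Fin n, deriv^[2] (fun X => g (X, ξ))
            (⟪(ξ : EuclideanSpace ℝ (Fin n)), x⟫ : ℝ) *
            (ξ : EuclideanSpace ℝ (Fin n)) i * (ξ : EuclideanSpace ℝ (Fin n)) i
          = deriv^[2] (fun X => g (X, ξ)) (⟪(ξ : EuclideanSpace ℝ (Fin n)), x⟫ : ℝ)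
        have : ∑ i : Fin n, deriv^[2] (fun X => g (X, ξ))
            (⟪(ξ : EuclideanSpace ℝ (Fin n)), x⟫ : ℝ) *
            (ξ : EuclideanSpace ℝ (Fin n)) i * (ξ : EuclideanSpace ℝ (Fin n)) i
          = deriv^[2] (fun X => g (X, ξ)) (⟪(ξ : EuclideanSpace ℝ (Fin n)), x⟫ : ℝ) *
            ∑ i : Fin n, (ξ : EuclideanSpace ℝ (Fin n)) i * (ξ : EuclideanSpace ℝ (Fin n)) i := by
          rw [Finset.mul_sum]; apply Finset.sum_congr rfl; intros; ring
        rw [this, hsum ξ, mul_one]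
    _ = backproj (fun p => deriv (deriv (fun X : ℝ => g (X, p.2))) p.1) x := by
        rw [backproj]
        apply integral_congr_ae
        refine Filter.Eventually.of_forall fun ξ => ?_
        simp [Function.iterate_succ_apply', Function.iterate_zero]
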